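/- arXiv:1002.3866 — 2 statements merged into one kernel-verified Lean document; each statement's English description precedes it below -/
import Mathlib

section
/- For strict pin words u and w, u ≼ w if and only if φ(u) is a factor (contiguous subword) of φ(w). -/
namespace PinWords

inductive Letter | N1 | N2 | N3 | N4 | U | D | L | R
  deriving DecidableEq

open Letter

def isNumeral : Letter → Prop
  | N1 | N2 | N3 | N4 => True
  | _ => False

def isDir : Letter → Prop
  | U | D | L | R => True
  | _ => False

def isVert : Letter → Prop
  | U | D => True
  | _ => False

def isHoriz : Letter → Prop
  | L | R => True
  | _ => False

/-- Consecutive letters alternate between the horizontal class {L,R}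
and the vertical class {U,D}. -/
def Alternating : List Letter → Prop
  | a :: b :: rest => ((isHoriz a ∧ isVert b) ∨ (isVert a ∧ isHoriz b)) ∧ Alternating (b :: rest)
  | _ => True

/-- A strict pin word: a numeral followed by a nonempty alternating sequence of directions. -/
def StrictPinWord : List Letter → Prop
  | c :: rest => isNumeral c ∧ rest ≠ [] ∧ (∀ x ∈ rest, isDir x) ∧ Alternating rest
  | [] => False

/-- A quasi-strict pin word: two numerals followed by alternating directions. -/
def QuasiStrictPinWord : List Letter → Prop
  | c :: d :: rest => isNumeral c ∧ isNumeral d ∧ (∀ x ∈ rest, isDir x) ∧ Alternating rest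
  | _ => False

/-- The set M : alternating direction words of length at least 3. -/
def InM (w : List Letter) : Prop :=
  3 ≤ w.length ∧ (∀ c ∈ w, isDir c) ∧ Alternating w

/-- The table defining φ on the first two letters. -/
def varphi : Letter → Letter → List Letter
  | N1, R => [R, U, R] | N2, R => [L, U, R] | N3, R => [L, D, R] | N4, R => [R, D, R]
  | N1, L => [R, U, L] | N2, L => [L, U, L] | N3, L => [L, D, L] | N4, L => [R, D, L]
  | N1, U => [U, R, U] | N2, U => [U, L, U] | N3, U => [D, L, U] | N4, U => [D, R, U]
  | N1, D => [U, R, D] | N2, D => [U, L, D] | N3, D => [D, L, D] | N4, D => [D, R, D]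
  | a, b => [a, b]

/-- The map φ : replace the first two letters according to the table, keep the rest. -/
def phi : List Letter → List Letter
  | a :: b :: rest => varphi a b ++ rest
  | w => w

/-- φ⁻¹ on two-letter direction words, giving a numeral. -/
def phiInv2 : Letter → Letter → Letter
  | R, U => N1 | U, R => N1
  | L, U => N2 | U, L => N2
  | L, D => N3 | D, L => N3
  | R, D => N4 | D, R => N4
  | _, _ => N1

/-- The quadrant function q on pairs of consecutive letters of a pin word. -/
def qfun (a b : Letter) : Letter :=
  match a with
  | N1 | N2 | N3 | N4 =>
    match varphi a b with
    | [_, x, y] => phiInv2 x y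
    | _ => N1
  | _ => phiInv2 a b

/-- A strong numeral-led factor: a numeral followed by directions. -/
def IsSNLF : List Letter → Prop
  | c :: rest => isNumeral c ∧ ∀ x ∈ rest, isDir x
  | [] => False

/-- The order ≼ on pin words of Brignall, Ruškuc and Vatter, via strong
numeral-led factor decompositions.  Each element of `t` is a triple
`(uᵢ, vᵢ, wᵢ)`. -/
def PinOrder (u w : List Letter) : Prop :=
  ∃ (t : List (List Letter × List Letter × List Letter)) (vfin : List Letter),
    u = (t.map fun x => x.1).flatten ∧
    w = (t.map fun x => x.2.1 ++ x.2.2).flatten ++ vfin ∧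
    ∀ x ∈ t, IsSNLF x.1 ∧
      ((∃ c rest, x.2.2 = c :: rest ∧ isNumeral c ∧ x.2.2 = x.1) ∨
       (∃ c rest l uc, x.2.2 = c :: rest ∧ isDir c ∧ x.2.1.getLast? = some l ∧
          x.1 = uc :: rest ∧ qfun l c = uc))

/-! ### Pin sequences in the plane -/

abbrev Pt := ℤ × ℤ

def SepVert (c : Pt) (P Q : Set Pt) : Prop :=
  ((∀ a ∈ P, a.1 < c.1) ∧ (∀ b ∈ Q, c.1 < b.1)) ∨
  ((∀ a ∈ P, c.1 < a.1) ∧ (∀ b ∈ Q, b.1 < c.1))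

def SepHoriz (c : Pt) (P Q : Set Pt) : Prop :=
  ((∀ a ∈ P, a.2 < c.2) ∧ (∀ b ∈ Q, c.2 < b.2)) ∨
  ((∀ a ∈ P, c.2 < a.2) ∧ (∀ b ∈ Q, b.2 < c.2))

/-- A horizontal or vertical line through `c` separates `P` from `Q`. -/
def Separates (c : Pt) (P Q : Set Pt) : Prop := SepVert c P Q ∨ SepHoriz c P Q

/-- `c` does not separate `S` into two nonempty parts. -/
def Independent (c : Pt) (S : Set Pt) : Prop :=
  ¬((∃ a ∈ S, a.1 < c.1) ∧ (∃ a ∈ S, c.1 < a.1)) ∧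
  ¬((∃ a ∈ S, a.2 < c.2) ∧ (∃ a ∈ S, c.2 < a.2))

/-- `c` lies in the bounding box of `S`. -/
def InBox (S : Set Pt) (c : Pt) : Prop :=
  (∃ a ∈ S, a.1 ≤ c.1) ∧ (∃ a ∈ S, c.1 ≤ a.1) ∧ (∃ a ∈ S, a.2 ≤ c.2) ∧ (∃ a ∈ S, c.2 ≤ a.2)

def DistinctCoords {n : ℕ} (p : Fin n → Pt) : Prop :=
  ∀ i j, i ≠ j → (p i).1 ≠ (p j).1 ∧ (p i).2 ≠ (p j).2

/-- The set of points `p j` for `j < i`. -/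
def prevSet {n : ℕ} (p : Fin n → Pt) (i : ℕ) : Set Pt := {x | ∃ j : Fin n, j.val < i ∧ x = p j}

/-- A pin sequence (0-indexed): each pin lies outside the bounding box of the
previous ones and either separates the previous pin from the earlier ones, or
is independent. -/
def IsPinSeq {n : ℕ} (p : Fin n → Pt) : Prop :=
  DistinctCoords p ∧
  ∀ i : Fin n, 1 ≤ i.val →
    ¬ InBox (prevSet p i.val) (p i) ∧
    (Separates (p i) {x | ∃ j : Fin n, j.val + 1 = i.val ∧ x = p j} (prevSet p (i.val - 1)) ∨
     Independent (p i) (prevSet p i.val))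

/-- A proper pin sequence: from the third pin on, each pin separates the
previous pin from the earlier ones. -/
def IsProperPinSeq {n : ℕ} (p : Fin n → Pt) : Prop :=
  IsPinSeq p ∧
  ∀ i : Fin n, 2 ≤ i.val →
    Separates (p i) {x | ∃ j : Fin n, j.val + 1 = i.val ∧ x = p j} (prevSet p (i.val - 1))

/-- The sequence of points `p` is order isomorphic to the diagram of `σ`. -/
def RepresentsPerm {k m : ℕ} (p : Fin k → Pt) (σ : Equiv.Perm (Fin m)) : Prop :=
  ∃ e : Fin k ≃ Fin m, ∀ i j : Fin k,
    ((p i).1 < (p j).1 ↔ e i < e j) ∧ ((p i).2 < (p j).2 ↔ σ (e i) < σ (e j))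

def IsIntervalSet {n : ℕ} (S : Set (Fin n)) : Prop :=
  ∀ a ∈ S, ∀ b ∈ S, ∀ c, a ≤ c → c ≤ b → c ∈ S

/-- A simple permutation: no nontrivial block. -/
def IsSimplePerm {n : ℕ} (σ : Equiv.Perm (Fin n)) : Prop :=
  ∀ S : Set (Fin n), IsIntervalSet S → IsIntervalSet (σ '' S) → S.ncard ≤ 1 ∨ S = Set.univ

/-- Pattern containment of permutations. -/
def IsPattern {k n : ℕ} (π : Equiv.Perm (Fin k)) (σ : Equiv.Perm (Fin n)) : Prop :=
  ∃ f : Fin k → Fin n, StrictMono f ∧ ∀ i j : Fin k, π i < π j ↔ σ (f i) < σ (f j)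

/-- The meaning of a letter of a pin word: `prev` is the set of all earlier
points (including the origin), `prevPin` is the previous pin, `older` is
`prev` minus the previous pin. -/
def LetterEncodes (c : Letter) (pt : Pt) (prev prevPin older : Set Pt) : Prop :=
  match c with
  | U => (∀ a ∈ prev, a.2 < pt.2) ∧ SepVert pt prevPin older
  | D => (∀ a ∈ prev, pt.2 < a.2) ∧ SepVert pt prevPin older
  | L => (∀ a ∈ prev, pt.1 < a.1) ∧ SepHoriz pt prevPin older
  | R => (∀ a ∈ prev, a.1 < pt.1) ∧ SepHoriz pt prevPin older
  | N1 => Independent pt prev ∧ ∀ a ∈ prev, a.1 < pt.1 ∧ a.2 < pt.2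
  | N2 => Independent pt prev ∧ ∀ a ∈ prev, pt.1 < a.1 ∧ a.2 < pt.2
  | N3 => Independent pt prev ∧ ∀ a ∈ prev, pt.1 < a.1 ∧ pt.2 < a.2
  | N4 => Independent pt prev ∧ ∀ a ∈ prev, a.1 < pt.1 ∧ pt.2 < a.2

/-- The word `w` encodes the extended pin sequence `p₀, p₁, …, p_n`
(the origin is `p 0`). -/
def Encodes (w : List Letter) (p : Fin (w.length + 1) → Pt) : Prop :=
  DistinctCoords p ∧
  ∀ k : Fin w.length,
    LetterEncodes (w.get k) (p k.succ)
      (prevSet p (k.val + 1))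
      {x | ∃ j : Fin (w.length + 1), j.val = k.val ∧ x = p j}
      (prevSet p k.val)

/-- The pin word `w` corresponds to the permutation `σ`. -/
def WordRepresents (w : List Letter) {m : ℕ} (σ : Equiv.Perm (Fin m)) : Prop :=
  ∃ p : Fin (w.length + 1) → Pt, Encodes w p ∧
    RepresentsPerm (fun i : Fin w.length => p i.succ) σ

/-- A proper pin-permutation: one admitting a proper pin representation. -/
def ProperPinPerm {n : ℕ} (σ : Equiv.Perm (Fin n)) : Prop :=
  ∃ p : Fin n → Pt, IsProperPinSeq p ∧ RepresentsPerm p σ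

/-- `pt` lies in the quadrant named by the numeral `c` of the bounding box of `S`. -/
def InQuadrant (c : Letter) (pt : Pt) (S : Set Pt) : Prop :=
  match c with
  | N1 => ∀ a ∈ S, a.1 < pt.1 ∧ a.2 < pt.2
  | N2 => ∀ a ∈ S, pt.1 < a.1 ∧ a.2 < pt.2
  | N3 => ∀ a ∈ S, pt.1 < a.1 ∧ pt.2 < a.2
  | N4 => ∀ a ∈ S, a.1 < pt.1 ∧ pt.2 < a.2
  | _ => False

/-- Two points are in knight position. -/
def Knight (a b : Pt) : Prop :=
  (|a.1 - b.1| = 1 ∧ |a.2 - b.2| = 2) ∨ (|a.1 - b.1| = 2 ∧ |a.2 - b.2| = 1)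

/-- The set E(π) of forbidden factors associated to a simple permutation π. -/
def Epi {m : ℕ} (π : Equiv.Perm (Fin m)) : Set (List Letter) :=
  {v | ∃ u, StrictPinWord u ∧ WordRepresents u π ∧ v = phi u} ∪
  {v | ∃ u x, QuasiStrictPinWord u ∧ WordRepresents u π ∧
      x.length = 2 ∧ (∀ c ∈ x, isDir c) ∧ v = x ++ phi u.tail ∧ Alternating v}

/-! A strict pin word contains a single numeral, so a decomposition witnessing `u ≼ w` consists
of one factor: either `u` is a prefix of `w`, or `w` contains `l c u₂ u₃ ⋯` with
`q(l, c) = u₁`. On the other side, `φ(u) = x y u₂ u₃ ⋯` where `x y u₂` is the unique alternating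
word with `φ⁻¹(x y) = u₁`, and `φ` keeps the letters of `w` from the second one on, so that
`q(w_{i-1}, w_i)` is `φ⁻¹` of the two letters of `φ(w)` ending at `w_i`. Locating `φ(u)` inside
`φ(w)` (at its start, or further right) matches the two cases. -/

instance : DecidablePred isNumeral := fun c => by
  cases c <;> first | exact isTrue trivial | exact isFalse id

instance : DecidablePred isDir := fun c => by
  cases c <;> first | exact isTrue trivial | exact isFalse id

instance : DecidablePred isVert := fun c => by
  cases c <;> first | exact isTrue trivial | exact isFalse id

instance : DecidablePred isHoriz := fun c => by
  cases c <;> first | exact isTrue trivial | exact isFalse id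

instance : Fintype Letter :=
  ⟨⟨[N1, N2, N3, N4, U, D, L, R], by decide⟩, fun x => by cases x <;> decide⟩

def AltPair (a b : Letter) : Prop := (isHoriz a ∧ isVert b) ∨ (isVert a ∧ isHoriz b)

instance (a b : Letter) : Decidable (AltPair a b) := by unfold AltPair; infer_instance

section Letters

variable {a b c l n p q x y : Letter}

theorem not_isNumeral_of_isDir (h : isDir a) : ¬ isNumeral a := by
  revert a; decide

theorem AltPair.isDir_right (h : AltPair a b) : isDir b := by
  revert a b; decide

theorem exists_varphi_eq (ha : isNumeral a) (hb : isDir b) : ∃ x y, varphi a b = [x, y, b] := by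
  revert a b; decide

theorem varphi_eq_iff (ha : isNumeral a) (hb : isDir b) :
    varphi a b = [x, y, b] ↔ AltPair x y ∧ AltPair y b ∧ phiInv2 x y = a := by
  revert a b x y; decide

theorem qfun_of_isDir (hl : isDir l) : qfun l c = phiInv2 l c := by
  revert l c; decide

theorem qfun_of_varphi_eq (h : varphi n c = [p, q, c]) : qfun n c = phiInv2 q c := by
  revert n c p q; decide

end Letters

theorem alternating_iff_isChain : ∀ {w : List Letter}, Alternating w ↔ w.IsChain AltPair
  | [] | [_] => by simp [Alternating]
  | a :: b :: rest => by rw [List.isChain_cons_cons, ← alternating_iff_isChain]; rfl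

theorem Alternating.infix {v w : List Letter} (hw : Alternating w) (h : v <:+: w) :
    Alternating v :=
  alternating_iff_isChain.2 ((alternating_iff_isChain.1 hw).infix h)

theorem phi_cons_cons {n e p q : Letter} (s : List Letter) (h : varphi n e = [p, q, e]) :
    phi (n :: e :: s) = p :: q :: e :: s := by
  simp [phi, h]

section Strict

variable {u w : List Letter}

theorem StrictPinWord.exists_eq_cons_cons (hw : StrictPinWord w) :
    ∃ n e s, w = n :: e :: s ∧ isNumeral n ∧ (∀ x ∈ e :: s, isDir x) ∧ Alternating (e :: s) := by
  match w, hw with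
  | n :: e :: s, ⟨hn, _, hdirs, halt⟩ => exact ⟨n, e, s, rfl, hn, hdirs, halt⟩

theorem StrictPinWord.isPrefix_of_isInfix {a : Letter} (hw : StrictPinWord w) (ha : isNumeral a)
    (h : a :: u <:+: w) : a :: u <+: w := by
  obtain ⟨n, e, s, rfl, -, hdirs, -⟩ := hw.exists_eq_cons_cons
  refine (List.infix_cons_iff.1 h).resolve_right fun h' => ?_
  exact not_isNumeral_of_isDir (hdirs a (h'.subset List.mem_cons_self)) ha

theorem StrictPinWord.alternating_phi (hw : StrictPinWord w) : Alternating (phi w) := by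
  obtain ⟨n, e, s, rfl, hn, hdirs, halt⟩ := hw.exists_eq_cons_cons
  obtain ⟨p, q, hpq⟩ := exists_varphi_eq hn (hdirs e List.mem_cons_self)
  obtain ⟨hp, hq, -⟩ := (varphi_eq_iff hn (hdirs e List.mem_cons_self)).1 hpq
  rw [phi_cons_cons s hpq]
  exact ⟨hp, hq, halt⟩

theorem phi_isPrefix_phi_iff (hu : StrictPinWord u) (hw : StrictPinWord w) :
    phi u <+: phi w ↔ u <+: w := by
  obtain ⟨a, b, r, rfl, ha, hudirs, -⟩ := hu.exists_eq_cons_cons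
  obtain ⟨n, e, s, rfl, hn, hwdirs, -⟩ := hw.exists_eq_cons_cons
  obtain ⟨x, y, hxy⟩ := exists_varphi_eq ha (hudirs b List.mem_cons_self)
  obtain ⟨p, q, hpq⟩ := exists_varphi_eq hn (hwdirs e List.mem_cons_self)
  rw [phi_cons_cons r hxy, phi_cons_cons s hpq]
  simp only [List.cons_prefix_cons]
  constructor
  · rintro ⟨rfl, rfl, rfl, hrs⟩
    have hx := ((varphi_eq_iff ha (hudirs b List.mem_cons_self)).1 hxy).2.2
    have hp := ((varphi_eq_iff hn (hwdirs b List.mem_cons_self)).1 hpq).2.2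
    exact ⟨hx.symm.trans hp, rfl, hrs⟩
  · rintro ⟨rfl, rfl, hrs⟩
    obtain ⟨rfl, rfl⟩ : x = p ∧ y = q := by simpa [hxy] using hpq
    exact ⟨rfl, rfl, rfl, hrs⟩

theorem StrictPinWord.exists_infix_phi_of_infix {l c : Letter} {z : List Letter}
    (hw : StrictPinWord w) (h : l :: c :: z <:+: w) :
    ∃ l', l' :: c :: z <:+: phi w ∧ qfun l c = phiInv2 l' c := by
  obtain ⟨n, e, s, rfl, hn, hdirs, -⟩ := hw.exists_eq_cons_cons
  obtain ⟨p, q, hpq⟩ := exists_varphi_eq hn (hdirs e List.mem_cons_self)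
  have hsuffix : e :: s <:+ phi (n :: e :: s) := ⟨[p, q], (phi_cons_cons s hpq).symm⟩
  rcases List.infix_cons_iff.1 h with h | h
  · obtain ⟨rfl, rfl, hz⟩ := by simpa only [List.cons_prefix_cons] using h
    refine ⟨q, ?_, qfun_of_varphi_eq hpq⟩
    rw [phi_cons_cons s hpq]
    exact List.infix_cons (List.cons_prefix_cons.2 ⟨rfl, List.cons_prefix_cons.2 ⟨rfl, hz⟩⟩).isInfix
  · exact ⟨l, h.trans hsuffix.isInfix, qfun_of_isDir (hdirs l (h.subset List.mem_cons_self))⟩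

theorem StrictPinWord.isPrefix_or_exists_of_infix_phi {l' c : Letter} {z : List Letter}
    (hw : StrictPinWord w) (h : l' :: c :: z <:+: phi w) :
    l' :: c :: z <+: phi w ∨ ∃ l, l :: c :: z <:+: w ∧ qfun l c = phiInv2 l' c := by
  obtain ⟨n, e, s, rfl, hn, hdirs, -⟩ := hw.exists_eq_cons_cons
  obtain ⟨p, q, hpq⟩ := exists_varphi_eq hn (hdirs e List.mem_cons_self)
  rw [phi_cons_cons s hpq] at h ⊢
  refine (List.infix_cons_iff.1 h).imp_right fun h => ?_
  rcases List.infix_cons_iff.1 h with h | h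
  · obtain ⟨rfl, rfl, hz⟩ := by simpa only [List.cons_prefix_cons] using h
    exact ⟨n, (List.cons_prefix_cons.2 ⟨rfl, List.cons_prefix_cons.2 ⟨rfl, hz⟩⟩).isInfix,
      qfun_of_varphi_eq hpq⟩
  · exact ⟨l', List.infix_cons h, qfun_of_isDir (hdirs l' (h.subset List.mem_cons_self))⟩

end Strict

theorem exists_eq_singleton_of_isSNLF_flatten {L : List (List Letter)} (hL : ∀ v ∈ L, IsSNLF v)
    (h : IsSNLF L.flatten) : ∃ v, L = [v] := by
  match L, hL, h with
  | [], _, h => exact h.elim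
  | [v], _, _ => exact ⟨v, rfl⟩
  | v :: v' :: L, hL, h =>
    match v, v', hL v List.mem_cons_self, hL v' (by simp) with
    | _ :: _, d :: _, _, ⟨hd, _⟩ =>
      exact absurd hd (not_isNumeral_of_isDir (h.2 d (by simp)))

theorem pinOrder_cons_iff {a : Letter} {rest w : List Letter} (h : IsSNLF (a :: rest)) :
    PinOrder (a :: rest) w ↔
      a :: rest <:+: w ∨ ∃ l c, isDir c ∧ qfun l c = a ∧ l :: c :: rest <:+: w := by
  constructor
  · rintro ⟨t, vfin, hu, rfl, ht⟩
    obtain ⟨x, hsingle⟩ := exists_eq_singleton_of_isSNLF_flatten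
      (by simpa using fun x hx => (ht x hx).1) (hu ▸ h)
    obtain ⟨⟨u', v, w'⟩, rfl, rfl⟩ := List.map_eq_singleton_iff.1 hsingle
    simp only [List.map_cons, List.map_nil, List.flatten_cons, List.flatten_nil,
      List.append_nil] at hu ⊢
    obtain ⟨-, hcase⟩ := ht _ List.mem_cons_self
    dsimp only at hcase
    rcases hcase with ⟨-, -, -, -, rfl⟩ | ⟨c, rest', l, uc, rfl, hc, hl, hu', hq⟩
    · exact Or.inl ⟨v, vfin, by rw [hu]⟩
    · obtain ⟨rfl, rfl⟩ : a = uc ∧ rest = rest' := by simpa [hu'] using hu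
      obtain ⟨v, rfl⟩ := List.getLast?_eq_some_iff.1 hl
      exact Or.inr ⟨l, c, hc, hq, v, vfin, by simp⟩
  · rintro (⟨v, vfin, rfl⟩ | ⟨l, c, hc, hq, v, vfin, rfl⟩)
    · refine ⟨[(a :: rest, v, a :: rest)], vfin, by simp, by simp, fun x hx => ?_⟩
      obtain rfl := List.mem_singleton.1 hx
      exact ⟨h, Or.inl ⟨a, rest, rfl, h.1, rfl⟩⟩
    · refine ⟨[(a :: rest, v ++ [l], c :: rest)], vfin, by simp, by simp, fun x hx => ?_⟩
      obtain rfl := List.mem_singleton.1 hx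
      exact ⟨h, Or.inr ⟨c, rest, l, a, rfl, hc, List.getLast?_concat, rfl, hq⟩⟩

/-- for strict pin words u and w, u ≼ w iff φ(u) is a factor of φ(w). -/
theorem pinOrder_iff_factor (u w : List Letter)
    (hu : StrictPinWord u) (hw : StrictPinWord w) :
    PinOrder u w ↔ phi u <:+: phi w := by
  obtain ⟨a, b, r, rfl, ha, hdirs, -⟩ := hu.exists_eq_cons_cons
  have hb : isDir b := hdirs b List.mem_cons_self
  rw [pinOrder_cons_iff ⟨ha, hdirs⟩]
  constructor
  · rintro (h | ⟨l, c, -, rfl, h⟩)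
    · exact ((phi_isPrefix_phi_iff hu hw).2 (hw.isPrefix_of_isInfix ha h)).isInfix
    · obtain ⟨l', h', hq⟩ := hw.exists_infix_phi_of_infix h
      obtain ⟨hl'c, hcb, -⟩ := hw.alternating_phi.infix h'
      rwa [phi_cons_cons r ((varphi_eq_iff ha hb).2 ⟨hl'c, hcb, hq.symm⟩)]
  · intro h
    obtain ⟨x, y, hxy⟩ := exists_varphi_eq ha hb
    obtain ⟨hx, -, hq⟩ := (varphi_eq_iff ha hb).1 hxy
    rw [phi_cons_cons r hxy] at h
    rcases hw.isPrefix_or_exists_of_infix_phi h with h | ⟨l, h, hl⟩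
    · rw [← phi_cons_cons r hxy, phi_isPrefix_phi_iff hu hw] at h
      exact Or.inl h.isInfix
    · exact Or.inr ⟨l, y, hx.isDir_right, hl.trans hq, h⟩

end PinWords
end

section
/- In a proper pin representation (p₁,…,p_n) of a permutation σ, if p_i occupies position k in σ (i.e., p_i corresponds to the point (k, σ_k)), then p_{i+1} corresponds to a point whose position is k−1 or k+1, or whose value is σ_k−1 or σ_k+1. -/
namespace PinWords

open Letter

/-! Reflecting a pin sequence in the diagonal exchanges vertical and horizontal separation, so it
suffices to treat a pin `p j` separating `p i` (`i + 1 = j`) from the older pins by a vertical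
line. If some pin `p k` had its abscissa strictly between those of `p i` and `p j`, then `k > j`,
and the older pins `p i` and `p 0` lie on both sides of the vertical line through `p k`. A
vertical separation by `p k` is then impossible, and a horizontal one would put `p k` inside the
bounding box of the earlier pins. In the diagram of a permutation the abscissas form an interval
of integers, so the abscissas of `p i` and `p j` are consecutive. -/

theorem Int.eq_add_one_or_eq_sub_one_of_forall_notMem_uIoo {S : Set ℤ} (hS : S.OrdConnected)
    {a b : ℤ} (ha : a ∈ S) (hb : b ∈ S) (hab : a ≠ b) (hgap : ∀ c ∈ S, c ∉ Set.uIoo a b) :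
    b = a + 1 ∨ b = a - 1 := by
  rcases hab.lt_or_gt with hlt | hgt
  · have h := hgap (a + 1) (hS.out ha hb ⟨by omega, by omega⟩)
    rw [Set.uIoo_of_lt hlt, Set.mem_Ioo] at h
    omega
  · have h := hgap (a - 1) (hS.out hb ha ⟨by omega, by omega⟩)
    rw [Set.uIoo_of_gt hgt, Set.mem_Ioo] at h
    omega

theorem range_natCast_fin (n : ℕ) : Set.range (fun m : Fin n => (m : ℤ)) = Set.Ico 0 (n : ℤ) := by
  ext v
  simp only [Set.mem_range, Set.mem_Ico]
  constructor
  · rintro ⟨m, rfl⟩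
    omega
  · intro h
    exact ⟨⟨v.toNat, by omega⟩, by simp only; omega⟩

section Swap

variable {n : ℕ} {p : Fin n → Pt}

theorem image_swap_setOf (P : Fin n → Prop) :
    Prod.swap '' {x | ∃ j, P j ∧ x = p j} = {x | ∃ j, P j ∧ x = (p j).swap} := by
  ext x
  constructor
  · rintro ⟨_, ⟨j, hj, rfl⟩, rfl⟩
    exact ⟨j, hj, rfl⟩
  · rintro ⟨j, hj, rfl⟩
    exact ⟨_, ⟨j, hj, rfl⟩, rfl⟩

theorem prevSet_swap (m : ℕ) : prevSet (fun k => (p k).swap) m = Prod.swap '' prevSet p m :=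
  (image_swap_setOf _).symm

variable {c : Pt} {P Q S : Set Pt}

theorem sepVert_swap : SepVert c.swap (Prod.swap '' P) (Prod.swap '' Q) ↔ SepHoriz c P Q := by
  simp only [SepVert, SepHoriz, Set.forall_mem_image, Prod.fst_swap]

theorem sepHoriz_swap : SepHoriz c.swap (Prod.swap '' P) (Prod.swap '' Q) ↔ SepVert c P Q := by
  simp only [SepVert, SepHoriz, Set.forall_mem_image, Prod.snd_swap]

theorem separates_swap : Separates c.swap (Prod.swap '' P) (Prod.swap '' Q) ↔ Separates c P Q := by
  rw [Separates, Separates, sepVert_swap, sepHoriz_swap, or_comm]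

theorem inBox_swap : InBox (Prod.swap '' S) c.swap ↔ InBox S c := by
  simp only [InBox, Set.exists_mem_image, Prod.fst_swap, Prod.snd_swap]
  tauto

theorem independent_swap : Independent c.swap (Prod.swap '' S) ↔ Independent c S := by
  simp only [Independent, Set.exists_mem_image, Prod.fst_swap, Prod.snd_swap]
  tauto

theorem IsProperPinSeq.swap (hp : IsProperPinSeq p) : IsProperPinSeq (fun k => (p k).swap) := by
  obtain ⟨⟨hdc, hpin⟩, hsep⟩ := hp
  simp only [IsProperPinSeq, IsPinSeq, prevSet_swap, ← image_swap_setOf (p := p), inBox_swap,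
    separates_swap, independent_swap]
  exact ⟨⟨fun i j hij => (hdc i j hij).symm, hpin⟩, hsep⟩

end Swap

section Separation

variable {n : ℕ} {p : Fin n → Pt}

theorem prevSet_mono {m m' : ℕ} (h : m ≤ m') : prevSet p m ⊆ prevSet p m' := by
  rintro _ ⟨j, hj, rfl⟩
  exact ⟨j, hj.trans_le h, rfl⟩

theorem IsProperPinSeq.fst_notMem_uIoo_of_mem_prevSet (hp : IsProperPinSeq p) {k : Fin n}
    (hk : 2 ≤ k.val) {a b : Pt} (ha : a ∈ prevSet p (k.val - 1)) (hb : b ∈ prevSet p (k.val - 1)) :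
    (p k).1 ∉ Set.uIoo a.1 b.1 := by
  wlog hab : a.1 ≤ b.1 generalizing a b
  · rw [Set.uIoo_comm]
    exact this hb ha (le_of_not_ge hab)
  rw [Set.uIoo_of_le hab]
  rintro ⟨hak, hkb⟩
  have hlast : p ⟨k.val - 1, by omega⟩ ∈ {x | ∃ j : Fin n, j.val + 1 = k.val ∧ x = p j} :=
    ⟨_, by simp only; omega, rfl⟩
  have hlast_mem : p ⟨k.val - 1, by omega⟩ ∈ prevSet p k.val := ⟨_, by simp only; omega, rfl⟩
  have hsub := prevSet_mono (p := p) (Nat.sub_le k.val 1)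
  rcases hp.2 k hk with (⟨_, hQ⟩ | ⟨_, hQ⟩) | hsep
  · exact absurd (hQ a ha) (by omega)
  · exact absurd (hQ b hb) (by omega)
  · refine (hp.1.2 k (by omega)).1 ⟨⟨a, hsub ha, hak.le⟩, ⟨b, hsub hb, hkb.le⟩, ?_⟩
    rcases hsep with ⟨hP, hQ⟩ | ⟨hP, hQ⟩
    · exact ⟨⟨_, hlast_mem, (hP _ hlast).le⟩, ⟨a, hsub ha, (hQ a ha).le⟩⟩
    · exact ⟨⟨a, hsub ha, (hQ a ha).le⟩, ⟨_, hlast_mem, (hP _ hlast).le⟩⟩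

theorem IsProperPinSeq.fst_notMem_uIoo_of_sepVert (hp : IsProperPinSeq p) {i j : Fin n}
    (hij : i.val + 1 = j.val) (hj : 2 ≤ j.val)
    (hsep : SepVert (p j) {x | ∃ j' : Fin n, j'.val + 1 = j.val ∧ x = p j'} (prevSet p (j.val - 1)))
    (k : Fin n) : (p k).1 ∉ Set.uIoo (p i).1 (p j).1 := by
  intro hk
  have hi : p i ∈ {x | ∃ j' : Fin n, j'.val + 1 = j.val ∧ x = p j'} := ⟨i, hij, rfl⟩
  have hside : ∀ a ∈ prevSet p (j.val - 1), (p j).1 ∈ Set.uIoo (p i).1 a.1 := by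
    intro a ha
    rcases hsep with ⟨hP, hQ⟩ | ⟨hP, hQ⟩
    · exact Set.mem_uIoo_of_lt (hP _ hi) (hQ a ha)
    · exact Set.mem_uIoo_of_gt (hQ a ha) (hP _ hi)
  obtain hjk | hkj := lt_or_ge j.val k.val
  · have h0 : p ⟨0, by omega⟩ ∈ prevSet p (j.val - 1) := ⟨_, by simp only; omega, rfl⟩
    refine hp.fst_notMem_uIoo_of_mem_prevSet (k := k) (by omega) (a := p i) (b := p ⟨0, by omega⟩)
      ⟨i, by omega, rfl⟩ ⟨_, by simp only; omega, rfl⟩ ?_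
    have h0j := hside _ h0
    rw [← Set.Ioo_min_max] at hk h0j ⊢
    simp only [Set.mem_Ioo] at hk h0j ⊢
    omega
  obtain rfl | hki := eq_or_ne k i
  · exact Set.left_notMem_uIoo hk
  obtain rfl | hkj' := eq_or_ne k j
  · exact Set.right_notMem_uIoo hk
  have hkside := hside (p k) ⟨k, by omega, rfl⟩
  rw [← Set.Ioo_min_max] at hk hkside
  simp only [Set.mem_Ioo] at hk hkside
  omega

theorem IsProperPinSeq.fst_eq_add_one_or_sub_one_of_sepVert (hp : IsProperPinSeq p)
    (hS : (Set.range fun k => (p k).1).OrdConnected) {i j : Fin n}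
    (hij : i.val + 1 = j.val) (hj : 2 ≤ j.val)
    (hsep : SepVert (p j) {x | ∃ j' : Fin n, j'.val + 1 = j.val ∧ x = p j'} (prevSet p (j.val - 1))) :
    (p j).1 = (p i).1 + 1 ∨ (p j).1 = (p i).1 - 1 :=
  Int.eq_add_one_or_eq_sub_one_of_forall_notMem_uIoo hS ⟨i, rfl⟩ ⟨j, rfl⟩
    (hp.1.1 i j (Fin.ne_of_val_ne (by omega))).1
    (by rintro _ ⟨k, rfl⟩; exact hp.fst_notMem_uIoo_of_sepVert hij hj hsep k)

end Separation

section Diagram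

variable {n : ℕ} {p : Fin n → Pt} (σ : Equiv.Perm (Fin n))
  (hdiag : Set.range p = {x : Pt | ∃ k : Fin n, x = ((k.val : ℤ), ((σ k).val : ℤ))})
include hdiag

theorem range_eq_range_diagram :
    Set.range p = Set.range (fun k : Fin n => ((k : ℤ), ((σ k : ℕ) : ℤ))) := by
  rw [hdiag]
  ext x
  simp [eq_comm]

theorem ordConnected_range_fst : (Set.range fun k => (p k).1).OrdConnected := by
  rw [Set.range_comp' Prod.fst p, range_eq_range_diagram σ hdiag, ← Set.range_comp',
    range_natCast_fin]
  exact Set.ordConnected_Ico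

theorem ordConnected_range_snd : (Set.range fun k => (p k).2).OrdConnected := by
  rw [Set.range_comp' Prod.snd p, range_eq_range_diagram σ hdiag, ← Set.range_comp']
  change (Set.range ((fun m : Fin n => (m : ℤ)) ∘ σ)).OrdConnected
  rw [σ.surjective.range_comp, range_natCast_fin]
  exact Set.ordConnected_Ico

end Diagram

/-- in a proper pin representation of σ (whose points form the
diagram of σ), each separating pin is adjacent to the previous pin in position
or in value. -/
theorem proper_pin_adjacent {n : ℕ} (σ : Equiv.Perm (Fin n)) (p : Fin n → Pt)
    (hp : IsProperPinSeq p)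
    (hdiag : Set.range p = {x : Pt | ∃ k : Fin n, x = ((k.val : ℤ), ((σ k).val : ℤ))}) :
    ∀ i j : Fin n, i.val + 1 = j.val → 2 ≤ j.val →
      (p j).1 = (p i).1 + 1 ∨ (p j).1 = (p i).1 - 1 ∨
      (p j).2 = (p i).2 + 1 ∨ (p j).2 = (p i).2 - 1 := by
  intro i j hij hj
  rcases hp.2 j hj with hvert | hhoriz
  · rcases hp.fst_eq_add_one_or_sub_one_of_sepVert (ordConnected_range_fst σ hdiag) hij hj hvert
      with h | h
    · exact Or.inl h
    · exact Or.inr (Or.inl h)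
  · rw [← sepVert_swap, ← prevSet_swap, image_swap_setOf] at hhoriz
    exact Or.inr (Or.inr
      (hp.swap.fst_eq_add_one_or_sub_one_of_sepVert (ordConnected_range_snd σ hdiag) hij hj hhoriz))

end PinWords
end
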